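/- arXiv:1511.06271 — 4 statements merged into one kernel-verified Lean document; each statement's English description precedes it below -/
import Mathlib

section
/- Let X be a topological space and F a sheaf of types on X. Suppose that every point x ∈ X has an open neighbourhood U such that the restriction of F to U is flasque, i.e. for all open subsets V' ⊆ W' ⊆ U the restriction map F(W') → F(V') is surjective. Then F is flasque: for every open subset V ⊆ X the restriction map F(X) → F(V) is surjective. -/
open CategoryTheory TopologicalSpace

universe u

section Aux

variable {X : TopCat.{u}} (F : TopCat.Sheaf (Type u) X)

lemma res_res {A B C : Opens X} (h1 : A ≤ B) (h2 : B ≤ C) (t : F.val.obj (Opposite.op C)) :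
    F.val.map (homOfLE h1).op (F.val.map (homOfLE h2).op t)
      = F.val.map (homOfLE (h1.trans h2)).op t := by
  rw [← FunctorToTypes.map_comp_apply]
  rfl

lemma res_id {A : Opens X} (t : F.val.obj (Opposite.op A)) :
    F.val.map (homOfLE (le_refl A)).op t = t := by
  rw [show homOfLE (le_refl A) = 𝟙 A from rfl]
  simp

variable (V : Opens X) (s : F.val.obj (Opposite.op V))

/-- Auxiliary structure: extensions of `s` to larger opens. -/
structure FlasqueExt where
  W : Opens X
  t : F.val.obj (Opposite.op W)
  hV : V ≤ W
  ht : F.val.map (homOfLE hV).op t = s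

instance : Preorder (FlasqueExt F V s) where
  le a b := ∃ h : a.W ≤ b.W, F.val.map (homOfLE h).op b.t = a.t
  le_refl a := ⟨le_rfl, res_id F a.t⟩
  le_trans a b c := by
    rintro ⟨h1, ht1⟩ ⟨h2, ht2⟩
    refine ⟨h1.trans h2, ?_⟩
    exact (res_res F h1 h2 c.t).symm.trans
      ((congrArg (F.val.map (homOfLE h1).op) ht2).trans ht1)

end Aux

/-- A sheaf of types which is locally flasque is flasque: if every point has
an open neighbourhood `U` such that the restriction maps `F(W') → F(V')` are surjective for all
opens `V' ⊆ W' ⊆ U`, then the restriction map `F(X) → F(V)` is surjective for every open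
`V ⊆ X`. -/
theorem stmt0 {X : TopCat.{u}} (F : TopCat.Sheaf (Type u) X)
    (h : ∀ x : X, ∃ U : Opens X, x ∈ U ∧
      ∀ (V' W' : Opens X) (hVW : V' ≤ W'), W' ≤ U →
        Function.Surjective (F.val.map (homOfLE hVW).op)) :
    ∀ V : Opens X,
      Function.Surjective (F.val.map (homOfLE (le_top : V ≤ ⊤)).op) := by
  intro V s
  haveI : Nonempty (FlasqueExt F V s) := ⟨⟨V, s, le_rfl, res_id F s⟩⟩
  have hbdd : ∀ c : Set (FlasqueExt F V s), IsChain (· ≤ ·) c → c.Nonempty → BddAbove c := by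
    intro c hc hne
    obtain ⟨a0, ha0⟩ := hne
    let U : c → Opens X := fun i => i.1.W
    let sf : ∀ i : c, F.val.obj (Opposite.op (U i)) := fun i => i.1.t
    have hcomp : TopCat.Presheaf.IsCompatible F.val U sf := by
      intro i j
      rcases hc.total i.2 j.2 with ⟨hW, ht⟩ | ⟨hW, ht⟩
      · exact (congrArg (F.val.map (homOfLE
          (inf_le_left : U i ⊓ U j ≤ U i)).op) ht).symm.trans
          (res_res F inf_le_left hW j.1.t)
      · exact ((congrArg (F.val.map (homOfLE
          (inf_le_right : U i ⊓ U j ≤ U j)).op) ht).symm.trans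
          (res_res F inf_le_right hW i.1.t)).symm
    obtain ⟨gl, hgl, -⟩ := F.existsUnique_gluing U sf hcomp
    have ha0le : a0.W ≤ iSup U := (Opens.leSupr U ⟨a0, ha0⟩).le
    refine ⟨⟨iSup U, gl, a0.hV.trans ha0le,
      (res_res F a0.hV ha0le gl).symm.trans
        ((congrArg (F.val.map (homOfLE a0.hV).op) (hgl ⟨a0, ha0⟩)).trans a0.ht)⟩,
      fun a ha => ⟨(Opens.leSupr U ⟨a, ha⟩).le, hgl ⟨a, ha⟩⟩⟩
  obtain ⟨m, hm⟩ := zorn_le_nonempty hbdd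
  -- Show the maximal extension is defined on all of X.
  have hall : ∀ x : X, x ∈ m.W := by
    intro x
    obtain ⟨U0, hxU0, hfl⟩ := h x
    obtain ⟨t', ht'⟩ := hfl (m.W ⊓ U0) U0 inf_le_right le_rfl
      (F.val.map (homOfLE (inf_le_left : m.W ⊓ U0 ≤ m.W)).op m.t)
    -- cover by m.W and U0
    let G : ULift.{u} Bool → Opens X := fun b => Bool.rec U0 m.W b.down
    let sf : ∀ b, F.val.obj (Opposite.op (G b)) := fun b =>
      Bool.rec (motive := fun b => F.val.obj (Opposite.op (G ⟨b⟩))) t' m.t b.down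
    have hcomp : TopCat.Presheaf.IsCompatible F.val G sf := by
      rintro ⟨(_|_)⟩ ⟨(_|_)⟩
      · rfl
      · -- on U0 ⊓ m.W
        have key := congrArg (F.val.map (homOfLE
          (le_inf inf_le_right inf_le_left : U0 ⊓ m.W ≤ m.W ⊓ U0)).op) ht'
        exact (res_res F _ inf_le_right t').symm.trans
          (key.trans (res_res F _ inf_le_left m.t))
      · exact ht'.symm
      · rfl
    obtain ⟨gl, hgl, -⟩ := F.existsUnique_gluing G sf hcomp
    have hWle : m.W ≤ iSup G := (Opens.leSupr G ⟨true⟩).le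
    have hUle : U0 ≤ iSup G := (Opens.leSupr G ⟨false⟩).le
    have hgt : F.val.map (homOfLE hWle).op gl = m.t := hgl ⟨true⟩
    let hnew : FlasqueExt F V s :=
      ⟨iSup G, gl, m.hV.trans hWle,
        (res_res F m.hV hWle gl).symm.trans
          ((congrArg (F.val.map (homOfLE m.hV).op) hgt).trans m.ht)⟩
    have hle : m ≤ hnew := ⟨hWle, hgt⟩
    obtain ⟨h', -⟩ := hm hle
    exact h' (hUle hxU0)
  have htop : (⊤ : Opens X) ≤ m.W := fun x _ => hall x
  refine ⟨F.val.map (homOfLE htop).op m.t, ?_⟩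
  exact (res_res F (le_top : V ≤ ⊤) htop m.t).trans m.ht
end

section
/- Let X be a topological space and let f: V₁ → V₂ be a morphism of sheaves of abelian groups on X such that V₁, V₂ and the kernel sheaf ker f are flasque. Then the image sheaf im f and the cokernel sheaf coker f (taken in the abelian category of sheaves of abelian groups on X) are flasque. -/
/-!
The sequences `0 → ker f → V₁ → im f → 0` and `0 → im f → V₂ → coker f → 0` are short exact.
In a short exact sequence of sheaves whose first term is flasque, sections of the last term lift
(a Zorn's lemma argument on partial lifts), so the last term is flasque as soon as the middle one
is. Apply this first to the image, then to the cokernel.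
-/

open CategoryTheory TopologicalSpace Limits

universe u

def IsFlasque {X : TopCat.{u}}
    (F : Sheaf (Opens.grothendieckTopology X) AddCommGrpCat.{u}) : Prop :=
  ∀ (U V : Opens X) (h : U ≤ V), Function.Surjective (F.val.map (homOfLE h).op)

theorem isFlasque_iff_sheaf_isFlasque {X : TopCat.{u}}
    (F : Sheaf (Opens.grothendieckTopology X) AddCommGrpCat.{u}) :
    IsFlasque F ↔ TopCat.Sheaf.IsFlasque F := by
  simp only [IsFlasque, ← AddCommGrpCat.epi_iff_surjective]
  exact ⟨fun h => ⟨fun i => h _ _ (leOfHom i.unop)⟩, fun h _ _ _ => h.epi _⟩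

section Abelian

variable {C : Type*} [Category C] [Abelian C] {A B : C} (f : A ⟶ B)

theorem shortExact_kernel_ι_factorThruImage :
    (ShortComplex.mk (kernel.ι f) (factorThruImage f)
      (by simp [← cancel_mono (image.ι f)])).ShortExact where
  exact := (ShortComplex.exact_iff_of_epi_of_isIso_of_mono
    (S₂ := ShortComplex.mk (kernel.ι f) f (kernel.condition f))
    { τ₁ := 𝟙 (kernel f), τ₂ := 𝟙 A, τ₃ := image.ι f }).2 (ShortComplex.exact_kernel f)

theorem shortExact_image_ι_cokernel_π :
    (ShortComplex.mk (image.ι f) (cokernel.π f)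
      (by simp [← cancel_epi (factorThruImage f)])).ShortExact where
  exact := (ShortComplex.exact_iff_of_epi_of_isIso_of_mono
    (S₁ := ShortComplex.mk f (cokernel.π f) (cokernel.condition f))
    { τ₁ := factorThruImage f, τ₂ := 𝟙 B, τ₃ := 𝟙 (cokernel f) }).1
    (ShortComplex.exact_cokernel f)

end Abelian

/-- If `f : V₁ ⟶ V₂` is a morphism of sheaves of abelian groups on a
topological space such that `V₁`, `V₂` and `ker f` are flasque, then `im f` and `coker f`
are flasque. -/
theorem stmt4 {X : TopCat.{u}}
    {V₁ V₂ : Sheaf (Opens.grothendieckTopology X) AddCommGrpCat.{u}} (f : V₁ ⟶ V₂)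
    (h₁ : IsFlasque V₁) (h₂ : IsFlasque V₂) (hker : IsFlasque (kernel f)) :
    IsFlasque (image f) ∧ IsFlasque (cokernel f) := by
  simp only [isFlasque_iff_sheaf_isFlasque] at h₁ h₂ hker ⊢
  have him := TopCat.Sheaf.IsFlasque.of_shortExact_of_isFlasque₁₂
    (shortExact_kernel_ι_factorThruImage f)
  exact ⟨him, .of_shortExact_of_isFlasque₁₂ (shortExact_image_ι_cokernel_π f)⟩
end

section
/- Let R be a Dedekind domain with field of fractions K, let ι: K → A_{R,K} be the canonical (diagonal) embedding of K into the finite adèle ring, and let κ: ∏_v O_v → A_{R,K} be the canonical embedding of the finite integral adèles. Then the sequence of R-modules 0 → R → K × ∏_v O_v → A_{R,K} → 0 is exact, where the first map sends r to (r, r) and the second sends (f, o) to ι(f) − κ(o). Explicitly: (i) an element f ∈ K with ι(f) ∈ κ(∏_v O_v) lies in R, so ι(K) ∩ κ(∏_v O_v) is the image of R; and (ii) every finite adèle is a sum ι(f) + κ(o) with f ∈ K and o ∈ ∏_v O_v, i.e. ι(K) + κ(∏_v O_v) = A_{R,K}. (This is Beilinson's adelic resolution of the structure sheaf in the case of the affine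 curve Spec R.) -/
/-!
An element of `K` that is integral at every height-one prime lies in `R`; this is exactness in the
middle. For surjectivity, clear the denominators of a finite adèle `a` by some nonzero `b ∈ R`, so
that `b a` is integral. Density of `R` in each `O_v`, together with the Chinese remainder theorem at
the finitely many primes dividing `b`, gives `r ∈ R` with `b a - r ∈ b ∏_v O_v`, and then
`a - r / b` is integral.
-/

namespace DedekindDomain

open IsDedekindDomain

/-- The finite integral adèles `∏_v O_v` (removed from Mathlib; restored with its old meaning). -/
def FiniteIntegralAdeles (R K : Type*) [CommRing R] [IsDedekindDomain R] [Field K]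
    [Algebra R K] [IsFractionRing R K] : Type _ :=
  ∀ v : HeightOneSpectrum R, v.adicCompletionIntegers K

noncomputable instance (R K : Type*) [CommRing R] [IsDedekindDomain R] [Field K]
    [Algebra R K] [IsFractionRing R K] : CommRing (FiniteIntegralAdeles R K) :=
  inferInstanceAs (CommRing (∀ v : HeightOneSpectrum R, v.adicCompletionIntegers K))

/-- The canonical embedding `∏_v O_v → A_{R,K}`, as in the old Mathlib. -/
noncomputable def FiniteIntegralAdeles.toFiniteAdeleRing (R K : Type*) [CommRing R]
    [IsDedekindDomain R] [Field K] [Algebra R K] [IsFractionRing R K] :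
    FiniteIntegralAdeles R K →+* FiniteAdeleRing R K where
  toFun r := ⟨fun v => (r v : v.adicCompletion K), Filter.Eventually.of_forall fun v => (r v).2⟩
  map_one' := rfl
  map_mul' _ _ := rfl
  map_zero' := rfl
  map_add' _ _ := rfl

noncomputable instance (R K : Type*) [CommRing R] [IsDedekindDomain R] [Field K]
    [Algebra R K] [IsFractionRing R K] :
    Algebra (FiniteIntegralAdeles R K) (FiniteAdeleRing R K) :=
  (FiniteIntegralAdeles.toFiniteAdeleRing R K).toAlgebra

end DedekindDomain

open DedekindDomain IsDedekindDomain

variable (R K : Type*) [CommRing R] [IsDedekindDomain R] [Field K] [Algebra R K]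
  [IsFractionRing R K]

/-- The `R`-algebra structure on the finite integral adèles `∏_v O_v`, obtained from the
`R`-algebra structures on the individual completions `O_v`. -/
noncomputable instance : Algebra R (FiniteIntegralAdeles R K) :=
  inferInstanceAs (Algebra R (∀ v : HeightOneSpectrum R, v.adicCompletionIntegers K))

section

variable {R K}

open WithZero
open scoped nonZeroDivisors

namespace IsDedekindDomain.HeightOneSpectrum

theorem valued_algebraMap_eq_valuation (v : HeightOneSpectrum R) (k : K) :
    Valued.v (algebraMap K (v.adicCompletion K) k) = v.valuation K k :=
  valuedAdicCompletion_eq_valuation' v k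

theorem valued_algebraMap_eq_intValuation (v : HeightOneSpectrum R) (r : R) :
    Valued.v (algebraMap R (v.adicCompletion K) r) = v.intValuation r := by
  rw [IsScalarTower.algebraMap_apply R K, valued_algebraMap_eq_valuation, valuation_of_algebraMap]

theorem exists_valued_sub_le_of_mem_adicCompletionIntegers (v : HeightOneSpectrum R)
    {x : v.adicCompletion K} (hx : x ∈ v.adicCompletionIntegers K) {γ : ℤᵐ⁰} (hγ : γ ≠ 0) :
    ∃ r : R, Valued.v (x - algebraMap R (v.adicCompletion K) r) ≤ γ := by
  obtain ⟨t, ht⟩ := v.valuation_surjective K γ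
  set t' := algebraMap K (v.adicCompletion K) t
  have ht' : Valued.v t' = γ := by rw [valued_algebraMap_eq_valuation, ht]
  -- the closed ball of radius `γ` about `x`, cut down to `O_v`; written this way it is visibly open
  let U : Set (v.adicCompletion K) :=
    (fun y => (y - x) * t'⁻¹) ⁻¹' v.adicCompletionIntegers K ∩ v.adicCompletionIntegers K
  have hO : IsOpen (v.adicCompletionIntegers K : Set (v.adicCompletion K)) :=
    Valued.isOpen_valuationSubring (v.adicCompletion K)
  have hU : IsOpen U := (hO.preimage ((continuous_sub_right x).mul continuous_const)).inter hO
  have hxU : x ∈ U := ⟨by simp only [Set.mem_preimage, sub_self, zero_mul]; exact zero_mem _, hx⟩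
  obtain ⟨k, hkx, hk⟩ := (denseRange_algebraMap K v).exists_mem_open hU ⟨x, hxU⟩
  have hkx' : Valued.v (algebraMap K _ k - x) ≤ γ := by
    rwa [Set.mem_preimage, SetLike.mem_coe, mem_adicCompletionIntegers, map_mul, map_inv₀,
      ← div_eq_mul_inv, ht', div_le_one₀ (zero_lt_iff.mpr hγ)] at hkx
  have hkv : v.valuation K k ≤ 1 := by
    rwa [← valued_algebraMap_eq_valuation]
  obtain ⟨a, ha⟩ := v.exists_valuation_sub_lt_of_integer hkv (Units.mk0 γ hγ)
  refine ⟨a, ?_⟩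
  have hxa : x - algebraMap R (v.adicCompletion K) a =
      algebraMap K _ (k - algebraMap R K a) - (algebraMap K _ k - x) := by
    rw [map_sub, IsScalarTower.algebraMap_apply R K (v.adicCompletion K)]; ring
  rw [hxa]
  refine (Valuation.map_sub _ _ _).trans (max_le ?_ hkx')
  rw [valued_algebraMap_eq_valuation, Valuation.map_sub_swap]
  exact ha.le

theorem exists_forall_valued_sub_le (S : Finset (HeightOneSpectrum R))
    {x : ∀ v : HeightOneSpectrum R, v.adicCompletion K}
    (hx : ∀ v ∈ S, x v ∈ v.adicCompletionIntegers K) (n : HeightOneSpectrum R → ℕ) :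
    ∃ r : R, ∀ v ∈ S,
      Valued.v (x v - algebraMap R (v.adicCompletion K) r) ≤ exp (-(n v : ℤ)) := by
  choose ρ hρ using fun v : S =>
    exists_valued_sub_le_of_mem_adicCompletionIntegers v.1 (hx v v.2) (γ := exp (-(n v : ℤ)))
      exp_ne_zero
  obtain ⟨r, hr⟩ := exists_forall_sub_mem_ideal (s := S) asIdeal n
    (fun v _ => v.prime) (fun _ _ _ _ hvw h => hvw (HeightOneSpectrum.ext h)) ρ
  refine ⟨r, fun v hv => ?_⟩
  have hrρ : Valued.v (algebraMap R (v.adicCompletion K) (r - ρ ⟨v, hv⟩)) ≤ exp (-(n v : ℤ)) := by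
    rw [valued_algebraMap_eq_intValuation, intValuation_le_pow_iff_mem]
    exact hr v hv
  have hsplit : x v - algebraMap R (v.adicCompletion K) r =
      (x v - algebraMap R _ (ρ ⟨v, hv⟩)) - algebraMap R _ (r - ρ ⟨v, hv⟩) := by
    rw [map_sub]; ring
  rw [hsplit]
  exact (Valuation.map_sub _ _ _).trans (max_le (hρ ⟨v, hv⟩) hrρ)

theorem exists_forall_valued_sub_le_valued {x : ∀ v : HeightOneSpectrum R, v.adicCompletion K}
    (hx : ∀ v, x v ∈ v.adicCompletionIntegers K) {b : R} (hb : b ≠ 0) :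
    ∃ r : R, ∀ v : HeightOneSpectrum R, Valued.v (x v - algebraMap R (v.adicCompletion K) r) ≤
      Valued.v (algebraMap R (v.adicCompletion K) b) := by
  have hb' : Ideal.span {b} ≠ 0 := by rwa [Ne, Ideal.zero_eq_bot, Ideal.span_singleton_eq_bot]
  obtain ⟨r, hr⟩ := exists_forall_valued_sub_le (Ideal.finite_factors hb').toFinset
    (fun v _ => hx v) (fun v => multiplicity v.asIdeal (Ideal.span {b}))
  refine ⟨r, fun v => ?_⟩
  rw [valued_algebraMap_eq_intValuation]
  by_cases hv : v.asIdeal ∣ Ideal.span {b}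
  · rw [intValuation_eq_exp_neg_multiplicity v hb]
    exact hr v ((Ideal.finite_factors hb').mem_toFinset.mpr hv)
  · rw [← intValuation_lt_one_iff_dvd, not_lt] at hv
    rw [le_antisymm (v.intValuation_le_one b) hv]
    exact sub_mem (hx v) (coe_mem_adicCompletionIntegers v r)

theorem exists_nonZeroDivisor_forall_mul_mem (S : Finset (HeightOneSpectrum R))
    (x : ∀ v : HeightOneSpectrum R, v.adicCompletion K) :
    ∃ b ∈ R⁰, ∀ v ∈ S, x v * algebraMap R (v.adicCompletion K) b ∈ v.adicCompletionIntegers K := by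
  classical
  induction S using Finset.induction_on with
  | empty => exact ⟨1, one_mem _, by simp⟩
  | insert v S _ ih =>
    obtain ⟨b, hb, hbS⟩ := ih
    obtain ⟨g, hg, hgv⟩ :=
      adicCompletion.mul_nonZeroDivisor_mem_adicCompletionIntegers v (x v * algebraMap R _ b)
    refine ⟨b * g, mul_mem hb hg, (Finset.forall_mem_insert _ _ _).mpr ⟨?_, fun w hw => ?_⟩⟩
    · rwa [map_mul, ← mul_assoc]
    · rw [map_mul, ← mul_assoc]
      exact mul_mem (hbS w hw) (coe_mem_adicCompletionIntegers w g)

end IsDedekindDomain.HeightOneSpectrum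

namespace IsDedekindDomain.FiniteAdeleRing

open HeightOneSpectrum

theorem exists_nonZeroDivisor_forall_mul_mem (a : FiniteAdeleRing R K) :
    ∃ b ∈ R⁰, ∀ v, a v * algebraMap R (v.adicCompletion K) b ∈ v.adicCompletionIntegers K := by
  have hfin : {v | a v ∉ v.adicCompletionIntegers K}.Finite := a.2
  obtain ⟨b, hb, hbS⟩ := HeightOneSpectrum.exists_nonZeroDivisor_forall_mul_mem hfin.toFinset a
  refine ⟨b, hb, fun v => ?_⟩
  by_cases hv : a v ∈ v.adicCompletionIntegers K
  · exact mul_mem hv (coe_mem_adicCompletionIntegers v b)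
  · exact hbS v (hfin.mem_toFinset.mpr hv)

theorem exists_forall_sub_algebraMap_mem (a : FiniteAdeleRing R K) :
    ∃ f : K, ∀ v, a v - algebraMap K (v.adicCompletion K) f ∈ v.adicCompletionIntegers K := by
  obtain ⟨b, hb, hab⟩ := exists_nonZeroDivisor_forall_mul_mem a
  obtain ⟨r, hr⟩ := exists_forall_valued_sub_le_valued hab (nonZeroDivisors.ne_zero hb)
  refine ⟨algebraMap R K r / algebraMap R K b, fun v => ?_⟩
  have hb0 : algebraMap R (v.adicCompletion K) b ≠ 0 := by
    rw [IsScalarTower.algebraMap_apply R K]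
    exact (map_ne_zero _).mpr (IsFractionRing.to_map_ne_zero_of_mem_nonZeroDivisors hb)
  have hsplit : a v - algebraMap K (v.adicCompletion K) (algebraMap R K r / algebraMap R K b) =
      (a v * algebraMap R _ b - algebraMap R _ r) / algebraMap R _ b := by
    rw [map_div₀, ← IsScalarTower.algebraMap_apply, ← IsScalarTower.algebraMap_apply]
    field_simp
  rw [hsplit, mem_adicCompletionIntegers, map_div₀]
  exact div_le_one_of_le₀ (hr v) zero_le

end IsDedekindDomain.FiniteAdeleRing

namespace DedekindDomain.FiniteIntegralAdeles

open HeightOneSpectrum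

theorem exists_algebraMap_eq_of_algebraMap_eq {k : K} {o : FiniteIntegralAdeles R K}
    (h : algebraMap K (FiniteAdeleRing R K) k = algebraMap (FiniteIntegralAdeles R K) _ o) :
    ∃ r : R, algebraMap R K r = k ∧ algebraMap R (FiniteIntegralAdeles R K) r = o := by
  have hv (v : HeightOneSpectrum R) : algebraMap K (v.adicCompletion K) k = o v := congr($h v)
  obtain ⟨r, rfl⟩ := mem_integers_of_valuation_le_one (R := R) K k fun v => by
    rw [← valued_algebraMap_eq_valuation, hv v]
    exact (o v).2
  exact ⟨r, rfl, funext fun v =>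
    Subtype.ext ((IsScalarTower.algebraMap_apply R K _ r).trans (hv v))⟩

end DedekindDomain.FiniteIntegralAdeles

end

/-- The sequence `0 → R → K × ∏_v O_v → A_{R,K} → 0` is exact, where the
first map is `r ↦ (r, r)` and the second is `(f, o) ↦ ι f - κ o`, with `ι : K → A_{R,K}` the
diagonal embedding and `κ : ∏_v O_v → A_{R,K}` the canonical embedding of the finite integral
adèles.  In particular `ι(K) ∩ κ(∏_v O_v)` is the image of `R`, and
`ι(K) + κ(∏_v O_v) = A_{R,K}`. -/
theorem stmt10 :
    Function.Injective
      (fun r : R =>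
        ((algebraMap R K r, algebraMap R (FiniteIntegralAdeles R K) r) :
          K × FiniteIntegralAdeles R K)) ∧
    Function.Exact
      (fun r : R =>
        ((algebraMap R K r, algebraMap R (FiniteIntegralAdeles R K) r) :
          K × FiniteIntegralAdeles R K))
      (fun p : K × FiniteIntegralAdeles R K =>
        algebraMap K (FiniteAdeleRing R K) p.1 -
          algebraMap (FiniteIntegralAdeles R K) (FiniteAdeleRing R K) p.2) ∧
    Function.Surjective
      (fun p : K × FiniteIntegralAdeles R K =>
        algebraMap K (FiniteAdeleRing R K) p.1 -
          algebraMap (FiniteIntegralAdeles R K) (FiniteAdeleRing R K) p.2) := by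
  refine ⟨fun r s h => IsFractionRing.injective R K congr(($h).1), fun p => ?_, fun a => ?_⟩
  · rw [sub_eq_zero]
    constructor
    · intro h
      obtain ⟨r, hk, ho⟩ := FiniteIntegralAdeles.exists_algebraMap_eq_of_algebraMap_eq h
      exact ⟨r, Prod.ext hk ho⟩
    · rintro ⟨r, rfl⟩
      rfl
  · obtain ⟨f, hf⟩ := FiniteAdeleRing.exists_forall_sub_algebraMap_mem a
    refine ⟨(f, -fun v => ⟨a v - algebraMap K _ f, hf v⟩), FiniteAdeleRing.ext K fun v => ?_⟩
    change algebraMap K _ f - -(a v - algebraMap K _ f) = a v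
    ring
end

section
/- Let R be a commutative Noetherian ring and let (M_i)_{i ∈ I} be an arbitrary (possibly infinite) family of flat R-modules. Then the product module ∏_{i ∈ I} M_i is a flat R-module. -/
/-!
Tensoring with a finitely presented module `N` commutes with arbitrary products: this is clear
for `N = R^n`, and it passes to a presentation `R^m → R^n → N → 0` because both
`- ⊗ ∏ M_i` and `∏ (- ⊗ M_i)` are right exact (five lemma). Over a Noetherian ring every ideal
`J` is finitely presented, so `J ⊗ ∏ M_i → R ⊗ ∏ M_i` is identified with the product of the maps
`J ⊗ M_i → R ⊗ M_i`, which are injective because the `M_i` are flat.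
-/

open TensorProduct LinearMap

theorem Function.Exact.piMap {ι : Type*} {A B C : ι → Type*} [∀ i, Zero (C i)]
    {f : ∀ i, A i → B i} {g : ∀ i, B i → C i} (h : ∀ i, Function.Exact (f i) (g i)) :
    Function.Exact (Pi.map f) (Pi.map g) := by
  intro y
  simp only [funext_iff, Pi.map_apply, Pi.zero_apply, h _ _, Set.mem_range]
  exact ⟨fun hy ↦ ⟨fun i ↦ (hy i).choose, fun i ↦ (hy i).choose_spec⟩,
    fun ⟨x, hx⟩ i ↦ ⟨x i, hx i⟩⟩

namespace TensorProduct

variable {R : Type*} [CommRing R] {I : Type*} (M : I → Type*)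
  [∀ i, AddCommGroup (M i)] [∀ i, Module R (M i)]

theorem piMap_rTensor_comp_piRightHom {N N' : Type*} [AddCommGroup N] [Module R N]
    [AddCommGroup N'] [Module R N'] (h : N →ₗ[R] N') :
    piMap (fun i ↦ rTensor (M i) h) ∘ₗ piRightHom R R N M =
      piRightHom R R N' M ∘ₗ rTensor (∀ i, M i) h :=
  TensorProduct.ext' fun _ _ ↦ rfl

theorem piRightHom_bijective_of_pi_of_finite (ι : Type*) [Finite ι] :
    Function.Bijective (piRightHom R R (ι → R) M) := by
  classical
  have := Fintype.ofFinite ι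
  let e₁ := TensorProduct.comm R (ι → R) (∀ i, M i) ≪≫ₗ piScalarRight R R (∀ i, M i) ι
  let e₂ := LinearEquiv.piCongrRight fun i ↦
    TensorProduct.comm R (ι → R) (M i) ≪≫ₗ piScalarRight R R (M i) ι
  let swap : (ι → ∀ i, M i) →ₗ[R] ∀ i, ι → M i := .pi fun i ↦ .pi fun t ↦ proj i ∘ₗ proj t
  have key : e₂.toLinearMap ∘ₗ piRightHom R R (ι → R) M = swap ∘ₗ e₁.toLinearMap :=
    TensorProduct.ext' fun v p ↦ by ext; simp [e₁, e₂, swap]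
  have h : Function.Bijective (e₂.toLinearMap ∘ₗ piRightHom R R (ι → R) M) := by
    rw [key]
    exact (Equiv.piComm _).bijective.comp e₁.bijective
  exact (e₂.comp_bijective _).mp h

theorem piRightHom_bijective_of_finitePresentation (N : Type*) [AddCommGroup N] [Module R N]
    [Module.FinitePresentation R N] :
    Function.Bijective (piRightHom R R N M) := by
  obtain ⟨n, m, π, g, hπ, hexact⟩ := Module.FinitePresentation.exists_fin' R N
  exact bijective_of_surjective_of_bijective_of_right_exact
    (rTensor (∀ i, M i) g) (rTensor (∀ i, M i) π)
    (piMap fun i ↦ rTensor (M i) g) (piMap fun i ↦ rTensor (M i) π)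
    _ _ _
    (piMap_rTensor_comp_piRightHom M g) (piMap_rTensor_comp_piRightHom M π)
    (rTensor_exact _ hexact hπ) (.piMap fun i ↦ rTensor_exact _ hexact hπ)
    (piRightHom_bijective_of_pi_of_finite M _).2 (piRightHom_bijective_of_pi_of_finite M _)
    (rTensor_surjective _ hπ) (.piMap fun i ↦ rTensor_surjective _ hπ)

theorem rTensor_pi_injective_of_finitePresentation {N N' : Type*} [AddCommGroup N] [Module R N]
    [AddCommGroup N'] [Module R N'] [Module.FinitePresentation R N]
    [∀ i, Module.Flat R (M i)] {f : N →ₗ[R] N'} (hf : Function.Injective f) :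
    Function.Injective (rTensor (∀ i, M i) f) := by
  have hfactors : Function.Injective (piMap fun i ↦ rTensor (M i) f) :=
    .piMap fun i ↦ Module.Flat.rTensor_preserves_injective_linearMap _ hf
  refine .of_comp (f := piRightHom R R N' M) ?_
  rw [← coe_comp, ← piMap_rTensor_comp_piRightHom, coe_comp]
  exact hfactors.comp (piRightHom_bijective_of_finitePresentation M N).1

end TensorProduct

/-- Over a commutative Noetherian ring, an arbitrary product of flat modules
is flat. -/
theorem stmt13 {R : Type*} [CommRing R] [IsNoetherianRing R]
    {I : Type*} (M : I → Type*) [∀ i, AddCommGroup (M i)] [∀ i, Module R (M i)]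
    (hM : ∀ i, Module.Flat R (M i)) :
    Module.Flat R (∀ i, M i) := by
  refine Module.Flat.iff_rTensor_injective'.mpr fun J ↦ ?_
  have := Module.finitePresentation_of_finite R J
  exact rTensor_pi_injective_of_finitePresentation M J.injective_subtype
end
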